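/- Let μ be a probability measure on a countable-product configuration space Ω = E^S. If for all Δ ⊆ Λ finite, all configurations u on Δ with μ(σ_Δ = u) > 0, and almost all ω, τ: |μ_Λ^ω(σ_Δ=u) − μ_Λ^τ(σ_Δ=u)| ≤ δ(Δ,Λ)·μ_Λ^τ(σ_Δ=u), then for every event B ∈ F_{Λᶜ} with μ(B) > 0: |μ(σ_Δ=u | B) − μ(σ_Δ=u)| ≤ δ(Δ,Λ)·μ(σ_Δ=u). -/

import Mathlib

/-!
Write `f ω = μ_Λ^ω(σ_Δ = u)` and `A = {σ_Δ = u}`, so that `μ(A ∩ B) = ∫_B f dμ` for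
`B ∈ F_{Λᶜ}`. Integrating the hypothesis in `τ` gives `(1 - δ) μ(A) ≤ f ω ≤ (1 + δ) μ(A)` for
almost every `ω`, and integrating this over `B` gives
`(1 - δ) μ(A) μ(B) ≤ μ(A ∩ B) ≤ (1 + δ) μ(A) μ(B)`.

The one subtlety is that `f` is not assumed measurable and the hypothesis only sees the real
parts of its values, so one first shows that `f` is finite almost everywhere: otherwise the
hypothesis forces `f ∈ {0, ∞}` almost everywhere, whence `μ(A) = ∫ f dμ ∈ {0, ∞}`.
-/

open MeasureTheory

/-- The σ-algebra on the configuration space `E^S` generated by the coordinates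
in `Λ ⊆ S`. -/
def cylAlg (S E : Type*) [MeasurableSpace E] (Λ : Set S) :
    MeasurableSpace (S → E) :=
  MeasurableSpace.comap (fun ω (i : Λ) => ω i) MeasurableSpace.pi

/-- The cylinder event `{σ_Δ = u}`. -/
def cylEvent {S E : Type*} (Δ : Set S) (u : Δ → E) : Set (S → E) :=
  {ω | ∀ i : Δ, ω i = u i}

open Filter ENNReal

namespace ENNReal

lemma le_ofReal_one_add_mul_of_abs_toReal_sub_le {x y : ℝ≥0∞} {d : ℝ} (hx : x ≠ ∞)
    (h : |x.toReal - y.toReal| ≤ d * y.toReal) : x ≤ ENNReal.ofReal (1 + d) * y :=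
  calc x = ENNReal.ofReal x.toReal := (ofReal_toReal hx).symm
    _ ≤ ENNReal.ofReal ((1 + d) * y.toReal) :=
        ofReal_le_ofReal (by linarith [(abs_le.mp h).2])
    _ = ENNReal.ofReal (1 + d) * ENNReal.ofReal y.toReal := ofReal_mul' toReal_nonneg
    _ ≤ ENNReal.ofReal (1 + d) * y := by gcongr; exact ofReal_toReal_le

lemma ofReal_one_sub_mul_le_of_abs_toReal_sub_le {x y : ℝ≥0∞} {d : ℝ} (hy : y ≠ ∞)
    (h : |x.toReal - y.toReal| ≤ d * y.toReal) : ENNReal.ofReal (1 - d) * y ≤ x :=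
  calc ENNReal.ofReal (1 - d) * y = ENNReal.ofReal (1 - d) * ENNReal.ofReal y.toReal := by
        rw [ofReal_toReal hy]
    _ = ENNReal.ofReal ((1 - d) * y.toReal) := (ofReal_mul' toReal_nonneg).symm
    _ ≤ ENNReal.ofReal x.toReal := ofReal_le_ofReal (by linarith [(abs_le.mp h).1])
    _ ≤ x := ofReal_toReal_le

end ENNReal

lemma abs_div_sub_le_of_mem_Icc {p q a d : ℝ} (hq : 0 < q)
    (h : p ∈ Set.Icc ((1 - d) * a * q) ((1 + d) * a * q)) : |p / q - a| ≤ d * a := by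
  have hlow : (1 - d) * a ≤ p / q := (le_div_iff₀ hq).mpr h.1
  have hupp : p / q ≤ (1 + d) * a := (div_le_iff₀ hq).mpr h.2
  exact abs_le.mpr ⟨by linarith, by linarith⟩

section RatioBound

variable {Ω : Type*} [MeasurableSpace Ω] {μ : Measure Ω} {f : Ω → ℝ≥0∞} {d : ℝ}

lemma lintegral_eq_zero_or_top_of_ae_eq_zero_or_top (h : ∀ᵐ ω ∂μ, f ω = 0 ∨ f ω = ∞) :
    ∫⁻ ω, f ω ∂μ = 0 ∨ ∫⁻ ω, f ω ∂μ = ∞ := by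
  refine or_iff_not_imp_left.2 fun h0 => top_le_iff.1 ?_
  have htop_mul : (fun ω => ∞ * f ω) =ᵐ[μ] f := by
    filter_upwards [h] with ω hω
    rcases hω with hω | hω <;> simp [hω]
  calc ∞ = ∞ * ∫⁻ ω, f ω ∂μ := (top_mul h0).symm
    _ ≤ ∫⁻ ω, ∞ * f ω ∂μ := lintegral_const_mul_le _ _
    _ = ∫⁻ ω, f ω ∂μ := lintegral_congr_ae htop_mul

lemma ae_toReal_pos_of_ae_ae_abs_toReal_sub_le
    (H : ∀ᵐ ω ∂μ, ∀ᵐ τ ∂μ, |(f ω).toReal - (f τ).toReal| ≤ d * (f τ).toReal)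
    (h0 : ∫⁻ ω, f ω ∂μ ≠ 0) (htop : ∫⁻ ω, f ω ∂μ ≠ ∞) :
    ∀ᵐ ω ∂μ, 0 < (f ω).toReal := by
  by_contra hpos
  simp only [not_eventually, not_lt] at hpos
  -- the non-null set `{(f τ).toReal = 0}` meets every co-null set, and there the hypothesis
  -- reads `|(f ω).toReal| ≤ 0`
  have hzero : ∀ᵐ ω ∂μ, f ω = 0 ∨ f ω = ∞ := by
    filter_upwards [H] with ω hω
    obtain ⟨τ, hτ, hτ0⟩ := (hω.and_frequently hpos).exists
    rw [le_antisymm hτ0 toReal_nonneg, mul_zero, sub_zero] at hτ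
    exact toReal_eq_zero_iff _ |>.mp (abs_nonpos_iff.mp hτ)
  exact (lintegral_eq_zero_or_top_of_ae_eq_zero_or_top hzero).elim h0 htop

section Probability

variable [IsProbabilityMeasure μ]

lemma le_mul_lintegral_of_ae_le_mul {x c : ℝ≥0∞} (hc : c ≠ ∞) (h : ∀ᵐ τ ∂μ, x ≤ c * f τ) :
    x ≤ c * ∫⁻ τ, f τ ∂μ :=
  calc x = ∫⁻ _, x ∂μ := by simp
    _ ≤ ∫⁻ τ, c * f τ ∂μ := lintegral_mono_ae h
    _ = c * ∫⁻ τ, f τ ∂μ := lintegral_const_mul' _ _ hc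

lemma mul_lintegral_le_of_ae_mul_le {x c : ℝ≥0∞} (hc : c ≠ ∞) (h : ∀ᵐ τ ∂μ, c * f τ ≤ x) :
    c * ∫⁻ τ, f τ ∂μ ≤ x :=
  calc c * ∫⁻ τ, f τ ∂μ = ∫⁻ τ, c * f τ ∂μ := (lintegral_const_mul' _ _ hc).symm
    _ ≤ ∫⁻ _, x ∂μ := lintegral_mono_ae h
    _ = x := by simp

lemma ae_mem_Icc_of_ae_ae_abs_toReal_sub_le
    (H : ∀ᵐ ω ∂μ, ∀ᵐ τ ∂μ, |(f ω).toReal - (f τ).toReal| ≤ d * (f τ).toReal)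
    (h0 : ∫⁻ ω, f ω ∂μ ≠ 0) (htop : ∫⁻ ω, f ω ∂μ ≠ ∞) :
    ∀ᵐ ω ∂μ, f ω ∈ Set.Icc (ENNReal.ofReal (1 - d) * ∫⁻ τ, f τ ∂μ)
      (ENNReal.ofReal (1 + d) * ∫⁻ τ, f τ ∂μ) := by
  have hfin : ∀ᵐ ω ∂μ, f ω ≠ ∞ := by
    filter_upwards [ae_toReal_pos_of_ae_ae_abs_toReal_sub_le H h0 htop] with ω hω
    exact (toReal_pos_iff.mp hω).2.ne
  filter_upwards [H, hfin] with ω hω hωfin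
  refine ⟨mul_lintegral_le_of_ae_mul_le ofReal_ne_top ?_,
    le_mul_lintegral_of_ae_le_mul ofReal_ne_top ?_⟩
  · filter_upwards [hω, hfin] with τ hτ hτfin
    exact ofReal_one_sub_mul_le_of_abs_toReal_sub_le hτfin hτ
  · filter_upwards [hω] with τ hτ
    exact le_ofReal_one_add_mul_of_abs_toReal_sub_le hωfin hτ

lemma measure_inter_mem_Icc_of_ae_ae_abs_toReal_sub_le {A B : Set Ω}
    (hA : μ A = ∫⁻ ω, f ω ∂μ) (hAB : μ (A ∩ B) = ∫⁻ ω in B, f ω ∂μ) (hA0 : μ A ≠ 0)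
    (H : ∀ᵐ ω ∂μ, ∀ᵐ τ ∂μ, |(f ω).toReal - (f τ).toReal| ≤ d * (f τ).toReal) :
    μ (A ∩ B) ∈ Set.Icc (ENNReal.ofReal (1 - d) * μ A * μ B)
      (ENNReal.ofReal (1 + d) * μ A * μ B) := by
  have hf := ae_mem_Icc_of_ae_ae_abs_toReal_sub_le H (hA ▸ hA0) (hA ▸ measure_ne_top μ A)
  rw [← hA] at hf
  rw [hAB, ← setLIntegral_const B (ENNReal.ofReal (1 - d) * μ A),
    ← setLIntegral_const B (ENNReal.ofReal (1 + d) * μ A)]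
  exact ⟨lintegral_mono_ae (ae_restrict_of_ae (hf.mono fun _ h => h.1)),
    lintegral_mono_ae (ae_restrict_of_ae (hf.mono fun _ h => h.2))⟩

lemma abs_toReal_measure_inter_div_sub_le_of_ae_ae_abs_toReal_sub_le
    (hd : 0 ≤ d) {A B : Set Ω}
    (hA : μ A = ∫⁻ ω, f ω ∂μ) (hAB : μ (A ∩ B) = ∫⁻ ω in B, f ω ∂μ)
    (hA0 : μ A ≠ 0) (hB0 : μ B ≠ 0)
    (H : ∀ᵐ ω ∂μ, ∀ᵐ τ ∂μ, |(f ω).toReal - (f τ).toReal| ≤ d * (f τ).toReal) :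
    |(μ (A ∩ B)).toReal / (μ B).toReal - (μ A).toReal| ≤ d * (μ A).toReal := by
  obtain ⟨hlow, hupp⟩ := measure_inter_mem_Icc_of_ae_ae_abs_toReal_sub_le hA hAB hA0 H
  refine abs_div_sub_le_of_mem_Icc (toReal_pos hB0 (measure_ne_top μ B)) ⟨?_, ?_⟩
  · calc (1 - d) * (μ A).toReal * (μ B).toReal
        ≤ (ENNReal.ofReal (1 - d)).toReal * (μ A).toReal * (μ B).toReal := by
          gcongr; exact toReal_ofReal' ▸ le_max_left _ _
      _ = (ENNReal.ofReal (1 - d) * μ A * μ B).toReal := by simp only [toReal_mul]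
      _ ≤ (μ (A ∩ B)).toReal := toReal_mono (measure_ne_top μ _) hlow
  · calc (μ (A ∩ B)).toReal ≤ (ENNReal.ofReal (1 + d) * μ A * μ B).toReal :=
          toReal_mono (by finiteness) hupp
      _ = (1 + d) * (μ A).toReal * (μ B).toReal := by
          rw [toReal_mul, toReal_mul, toReal_ofReal (by linarith)]

end Probability

end RatioBound

lemma cylAlg_measurableSet_cylEvent {S E : Type*} [MeasurableSpace E]
    [MeasurableSingletonClass E] {Δ Λ : Set S} (hΔΛ : Δ ⊆ Λ) (hΔ : Δ.Countable) (u : Δ → E) :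
    MeasurableSet[cylAlg S E Λ] (cylEvent Δ u) := by
  have := hΔ.to_subtype
  refine ⟨⋂ i : Δ, (fun x : Λ → E => x ⟨i, hΔΛ i.2⟩) ⁻¹' {u i}, ?_, ?_⟩
  · exact .iInter fun i => measurable_pi_apply _ (measurableSet_singleton _)
  · ext ω
    simp [cylEvent]

theorem conditional_ratio_bound_implies_psi_bound_general
    {S E : Type*} [MeasurableSpace E]
    [MeasurableSingletonClass E]
    (μ : @Measure (S → E) MeasurableSpace.pi)
    (hprob : @IsProbabilityMeasure _ MeasurableSpace.pi μ)
    (κ : Set S → (S → E) → @Measure (S → E) MeasurableSpace.pi)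
    (hdisint : ∀ (Λ : Set S) (A B : Set (S → E)),
      MeasurableSet[cylAlg S E Λ] A → MeasurableSet[cylAlg S E Λᶜ] B →
      μ (A ∩ B) = ∫⁻ ω in B, κ Λ ω A ∂μ)
    (δ : Set S → Set S → ℝ) (hδ : ∀ Δ Λ, 0 ≤ δ Δ Λ)
    (hmix : ∀ (Δ Λ : Set S), Δ ⊆ Λ → Λ.Finite → ∀ u : Δ → E,
      0 < μ (cylEvent Δ u) →
      ∀ᵐ ω ∂μ, ∀ᵐ τ ∂μ,
        |(κ Λ ω (cylEvent Δ u)).toReal - (κ Λ τ (cylEvent Δ u)).toReal|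
          ≤ δ Δ Λ * (κ Λ τ (cylEvent Δ u)).toReal) :
    ∀ (Δ Λ : Set S), Δ ⊆ Λ → Λ.Finite → ∀ u : Δ → E,
      0 < μ (cylEvent Δ u) →
      ∀ B : Set (S → E), MeasurableSet[cylAlg S E Λᶜ] B → 0 < μ B →
        |(μ (cylEvent Δ u ∩ B)).toReal / (μ B).toReal - (μ (cylEvent Δ u)).toReal|
          ≤ δ Δ Λ * (μ (cylEvent Δ u)).toReal := by
  intro Δ Λ hΔΛ hΛ u hμA B hB hμB
  have hA : MeasurableSet[cylAlg S E Λ] (cylEvent Δ u) :=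
    cylAlg_measurableSet_cylEvent hΔΛ (hΛ.subset hΔΛ).countable u
  have htot : μ (cylEvent Δ u) = ∫⁻ ω, κ Λ ω (cylEvent Δ u) ∂μ := by
    simpa using hdisint Λ _ Set.univ hA .univ
  exact abs_toReal_measure_inter_div_sub_le_of_ae_ae_abs_toReal_sub_le (hδ Δ Λ) htot
    (hdisint Λ _ B hA hB) hμA.ne' hμB.ne' (hmix Δ Λ hΔΛ hΛ u hμA)

/-- Let `μ` be a probability measure on `Ω = E^S` with regular
conditional probabilities `μ_Λ^ω = κ Λ ω` given `F_{Λᶜ}`. If for all finite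
`Δ ⊆ Λ`, all `u` with `μ(σ_Δ = u) > 0` and almost all `ω, τ` one has
`|μ_Λ^ω(σ_Δ=u) − μ_Λ^τ(σ_Δ=u)| ≤ δ(Δ,Λ)·μ_Λ^τ(σ_Δ=u)`, then for every
`B ∈ F_{Λᶜ}` with `μ(B) > 0`:
`|μ(σ_Δ=u | B) − μ(σ_Δ=u)| ≤ δ(Δ,Λ)·μ(σ_Δ=u)`. -/
theorem conditional_ratio_bound_implies_psi_bound
    {S E : Type*} [Countable S] [Fintype E] [MeasurableSpace E]
    [MeasurableSingletonClass E]
    (μ : @Measure (S → E) MeasurableSpace.pi)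
    (hprob : @IsProbabilityMeasure _ MeasurableSpace.pi μ)
    (κ : Set S → (S → E) → @Measure (S → E) MeasurableSpace.pi)
    (hdisint : ∀ (Λ : Set S) (A B : Set (S → E)),
      MeasurableSet[cylAlg S E Λ] A → MeasurableSet[cylAlg S E Λᶜ] B →
      μ (A ∩ B) = ∫⁻ ω in B, κ Λ ω A ∂μ)
    (δ : Set S → Set S → ℝ) (hδ : ∀ Δ Λ, 0 ≤ δ Δ Λ)
    (hmix : ∀ (Δ Λ : Set S), Δ ⊆ Λ → Λ.Finite → ∀ u : Δ → E,
      0 < μ (cylEvent Δ u) →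
      ∀ᵐ ω ∂μ, ∀ᵐ τ ∂μ,
        |(κ Λ ω (cylEvent Δ u)).toReal - (κ Λ τ (cylEvent Δ u)).toReal|
          ≤ δ Δ Λ * (κ Λ τ (cylEvent Δ u)).toReal) :
    ∀ (Δ Λ : Set S), Δ ⊆ Λ → Λ.Finite → ∀ u : Δ → E,
      0 < μ (cylEvent Δ u) →
      ∀ B : Set (S → E), MeasurableSet[cylAlg S E Λᶜ] B → 0 < μ B →
        |(μ (cylEvent Δ u ∩ B)).toReal / (μ B).toReal - (μ (cylEvent Δ u)).toReal|
          ≤ δ Δ Λ * (μ (cylEvent Δ u)).toReal :=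
  conditional_ratio_bound_implies_psi_bound_general μ hprob κ hdisint δ hδ hmix
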